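/- For positive masses m1, m2, m3 with m1 + m2 + m3 = 1, the Routh-type inequality m1·m2 + m1·m3 + m2·m3 < 1/27 implies that one of the masses exceeds 1 - μ_R, where μ_R = (1/2)(1 - √69/9); in particular one mass is greater than 0.96. -/
import Mathlib

lemma routh_aux (M a b : ℝ) (hM : 0 < M) (ha : 0 < a) (hb : 0 < b)
    (hsum : M + a + b = 1) (haM : a ≤ M) (hbM : b ≤ M)
    (hr : M * a + M * b + a * b < 1 / 27) :
    1 / 2 + Real.sqrt 69 / 18 < M ∧ (0.96 : ℝ) < M := by
  have hs : Real.sqrt 69 ^ 2 = 69 := Real.sq_sqrt (by norm_num)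
  have hs8 : (8.3 : ℝ) < Real.sqrt 69 := by
    nlinarith [Real.sqrt_nonneg 69]
  have hM3 : 1 / 3 ≤ M := by linarith
  have hkey : M * M - M + 1 / 27 > 0 := by nlinarith [mul_pos ha hb]
  have hmain : 1 / 2 + Real.sqrt 69 / 18 < M := by
    by_contra h
    push_neg at h
    nlinarith [mul_nonneg (show (0:ℝ) ≤ M - (1/2 - Real.sqrt 69/18) by nlinarith)
      (show (0:ℝ) ≤ 1/2 + Real.sqrt 69/18 - M by linarith)]
  exact ⟨hmain, by nlinarith⟩

/-- For positive masses with sum 1, the Routh-type inequality implies one mass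
exceeds `1 - μ_R`, in particular one mass is greater than `0.96`. -/
theorem routh_implies_dominant_mass (m1 m2 m3 : ℝ)
    (h1 : 0 < m1) (h2 : 0 < m2) (h3 : 0 < m3)
    (hsum : m1 + m2 + m3 = 1)
    (hrouth : m1 * m2 + m1 * m3 + m2 * m3 < 1 / 27) :
    let μR : ℝ := (1 / 2) * (1 - Real.sqrt 69 / 9)
    ∃ m, (m = m1 ∨ m = m2 ∨ m = m3) ∧ 1 - μR < m ∧ (0.96 : ℝ) < m := by
  intro μR
  have hμ : 1 - μR = 1 / 2 + Real.sqrt 69 / 18 := by simp only [μR]; ring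
  rcases le_total m1 m2 with h12 | h12
  · rcases le_total m2 m3 with h23 | h23
    · obtain ⟨hA, hB⟩ := routh_aux m3 m1 m2 h3 h1 h2 (by linarith) (by linarith)
        (by linarith) (by nlinarith)
      exact ⟨m3, Or.inr (Or.inr rfl), by linarith, hB⟩
    · obtain ⟨hA, hB⟩ := routh_aux m2 m1 m3 h2 h1 h3 (by linarith) h12 h23
        (by nlinarith)
      exact ⟨m2, Or.inr (Or.inl rfl), by linarith, hB⟩
  · rcases le_total m1 m3 with h13 | h13
    · obtain ⟨hA, hB⟩ := routh_aux m3 m1 m2 h3 h1 h2 (by linarith) h13 (by linarith)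
        (by nlinarith)
      exact ⟨m3, Or.inr (Or.inr rfl), by linarith, hB⟩
    · obtain ⟨hA, hB⟩ := routh_aux m1 m2 m3 h1 h2 h3 (by linarith) h12 h13
        (by nlinarith)
      exact ⟨m1, Or.inl rfl, by linarith, hB⟩
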